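/- Let v be C^∞ on a domain U ⊂ ℝⁿ (n ≥ 2), quasi-concave on ℝⁿ. Then at every point of U where Dv ≠ 0, div(|Dv|^{−2}(Δv · Dv − D²v Dv)) ≥ 0. -/

import Mathlib

/-- First partial derivative `∂v/∂xᵢ` of `v : ℝⁿ → ℝ`. -/
noncomputable def pgrad {n : ℕ} (v : (Fin n → ℝ) → ℝ) (x : Fin n → ℝ) (i : Fin n) : ℝ :=
  fderiv ℝ v x (Pi.single i 1)

/-- Second partial derivative `∂²v/∂xᵢ∂xⱼ` of `v : ℝⁿ → ℝ`. -/
noncomputable def phess {n : ℕ} (v : (Fin n → ℝ) → ℝ) (x : Fin n → ℝ) (i j : Fin n) : ℝ :=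
  fderiv ℝ (fun y => fderiv ℝ v y (Pi.single i 1)) x (Pi.single j 1)

/-- Divergence of a vector field `F : ℝⁿ → ℝⁿ`. -/
noncomputable def pdiv {n : ℕ} (F : (Fin n → ℝ) → (Fin n → ℝ)) (x : Fin n → ℝ) : ℝ :=
  ∑ i, fderiv ℝ (fun y => F y i) x (Pi.single i 1)

open Filter

lemma clm_eval {n : ℕ} (L : (Fin n → ℝ) →L[ℝ] ℝ) (z : Fin n → ℝ) :
    L z = ∑ i, z i * L (Pi.single i 1) := by
  conv_lhs => rw [← Finset.univ_sum_single z]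
  rw [map_sum]
  refine Finset.sum_congr rfl fun i _ => ?_
  have h : Pi.single (M := fun _ : Fin n => ℝ) i (z i)
      = z i • (Pi.single i (1:ℝ) : Fin n → ℝ) := by
    rw [← Pi.single_smul, smul_eq_mul, mul_one]
  rw [h, map_smul, smul_eq_mul]

lemma quad_discrim {a b c : ℝ} (h : ∀ s t : ℝ, a * s^2 + 2*b*(s*t) + c*t^2 ≤ 0) :
    b^2 ≤ a*c := by
  have h1 : ∀ s : ℝ, 0 ≤ (-a) * (s*s) + (-(2*b)) * s + (-c) := fun s => by
    have := h s 1; nlinarith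
  have h2 := discrim_le_zero h1
  rw [discrim] at h2; nlinarith

lemma nsd_trace_sq {n : ℕ} (A : Fin n → Fin n → ℝ)
    (hsymm : ∀ i j, A i j = A j i)
    (hnsd : ∀ z : Fin n → ℝ, (∑ i, ∑ j, A i j * z i * z j) ≤ 0) :
    ∑ i, ∑ j, (A i j)^2 ≤ (∑ i, A i i)^2 := by
  have key : ∀ i j, (A i j)^2 ≤ A i i * A j j := by
    intro i j
    apply quad_discrim; intro s t
    have h := hnsd (fun k => s * (if k = i then 1 else 0) + t * (if k = j then 1 else 0))
    have e1 : ∀ f : Fin n → ℝ,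
        (∑ k, f k * (s * (if k = i then 1 else 0) + t * (if k = j then 1 else 0)))
          = s * f i + t * f j := by
      intro f
      simp [mul_add, Finset.sum_add_distrib, mul_ite, mul_comm, Finset.mul_sum]
    have step1 : (∑ i', ∑ j', A i' j' *
        (s * (if i' = i then 1 else 0) + t * (if i' = j then 1 else 0)) *
        (s * (if j' = i then 1 else 0) + t * (if j' = j then 1 else 0)))
        = s * (s * A i i + t * A i j) + t * (s * A j i + t * A j j) := by
      have inner : ∀ i', (∑ j', A i' j' *
          (s * (if i' = i then 1 else 0) + t * (if i' = j then 1 else 0)) *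
          (s * (if j' = i then 1 else 0) + t * (if j' = j then 1 else 0)))
          = (s * A i' i + t * A i' j) *
            (s * (if i' = i then 1 else 0) + t * (if i' = j then 1 else 0)) := by
        intro i'
        have e2 := e1 (fun j' => A i' j')
        calc (∑ j', A i' j' *
            (s * (if i' = i then 1 else 0) + t * (if i' = j then 1 else 0)) *
            (s * (if j' = i then 1 else 0) + t * (if j' = j then 1 else 0)))
            = (∑ j', A i' j' *
              (s * (if j' = i then 1 else 0) + t * (if j' = j then 1 else 0))) *
              (s * (if i' = i then 1 else 0) + t * (if i' = j then 1 else 0)) := by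
              rw [Finset.sum_mul]
              exact Finset.sum_congr rfl fun j' _ => by ring
          _ = (s * A i' i + t * A i' j) *
              (s * (if i' = i then 1 else 0) + t * (if i' = j then 1 else 0)) := by
              rw [e2]
      rw [Finset.sum_congr rfl fun i' _ => inner i']
      have e3 := e1 (fun k => s * A k i + t * A k j)
      rw [e3]
    rw [step1] at h
    have hgoal : A i i * s ^ 2 + 2 * A i j * (s * t) + A j j * t ^ 2
        = s * (s * A i i + t * A i j) + t * (s * A j i + t * A j j) := by
      rw [hsymm i j]; ring
    rw [hgoal]; exact h
  calc ∑ i, ∑ j, (A i j)^2 ≤ ∑ i, ∑ j, A i i * A j j := by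
        refine Finset.sum_le_sum fun i _ => Finset.sum_le_sum fun j _ => key i j
    _ = (∑ i, A i i)^2 := by
        rw [sq, Finset.sum_mul_sum]

lemma pos_of_second_deriv (f D : ℝ → ℝ) (ε q : ℝ) (hε : 0 < ε)
    (hd : ∀ t : ℝ, |t| < ε → HasDerivAt f (D t) t)
    (hf0 : f 0 = 0) (hD0 : D 0 = 0)
    (hDq : HasDerivAt D q 0) (hq : 0 < q) :
    ∀ᶠ t in nhdsWithin (0:ℝ) {0}ᶜ, 0 < f t := by
  have hslope := hasDerivAt_iff_tendsto_slope.1 hDq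
  have hev : ∀ᶠ t in nhdsWithin (0:ℝ) {0}ᶜ, 0 < slope D 0 t :=
    hslope.eventually (eventually_gt_nhds hq)
  rw [eventually_nhdsWithin_iff, Metric.eventually_nhds_iff] at hev
  obtain ⟨δ, hδpos, hδ⟩ := hev
  set δ' := min δ ε with hδ'
  have hδ'pos : 0 < δ' := lt_min hδpos hε
  have hDpos : ∀ t : ℝ, 0 < t → t < δ' → 0 < D t := by
    intro t ht htδ
    have h1 : 0 < slope D 0 t := by
      apply hδ
      · simpa [Real.dist_eq, abs_of_pos ht] using lt_of_lt_of_le htδ (min_le_left _ _)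
      · simpa using ht.ne'
    rw [slope_def_field] at h1
    have : D t / t > 0 := by simpa [hD0] using h1
    exact (div_pos_iff.mp this).resolve_right (fun ⟨_, h⟩ => absurd ht (not_lt.2 h.le)) |>.1
  have hDneg : ∀ t : ℝ, t < 0 → -δ' < t → D t < 0 := by
    intro t ht htδ
    have h1 : 0 < slope D 0 t := by
      apply hδ
      · have : |t| < δ' := abs_lt.2 ⟨htδ, ht.trans hδ'pos⟩
        simpa [Real.dist_eq] using lt_of_lt_of_le this (min_le_left _ _)
      · simpa using ht.ne
    rw [slope_def_field] at h1
    have h2 : D t / t > 0 := by simpa [hD0] using h1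
    rcases div_pos_iff.mp h2 with ⟨h3, h4⟩ | ⟨h3, _⟩
    · exact absurd ht (not_lt.2 h4.le)
    · exact h3
  have hmain : ∀ t : ℝ, t ≠ 0 → |t| < δ' → 0 < f t := by
    intro t ht htδ
    rcases lt_or_gt_of_ne ht with htneg | htpos
    · -- t < 0 : MVT on [t, 0]
      have hcont : ContinuousOn f (Set.Icc t 0) := by
        intro y hy
        have : |y| < ε := by
          rw [abs_lt] at htδ ⊢
          constructor
          · linarith [hy.1, htδ.1, min_le_right δ ε]
          · have := hy.2; have := min_le_right δ ε; linarith
        exact ((hd y this).continuousAt).continuousWithinAt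
      obtain ⟨c, hc, hceq⟩ := exists_hasDerivAt_eq_slope f D htneg hcont (by
        intro y hy
        apply hd
        rw [abs_lt] at htδ ⊢
        constructor
        · linarith [hy.1, htδ.1, min_le_right δ ε]
        · have := hy.2; have := min_le_right δ ε; linarith)
      have hcneg : D c < 0 := by
        apply hDneg c hc.2
        rw [abs_lt] at htδ
        linarith [hc.1, htδ.1]
      rw [hf0] at hceq
      -- hceq : D c = (0 - f t) / (0 - t)
      have hden : (0:ℝ) - t > 0 := by linarith
      have : (0 - f t) / (0 - t) < 0 := hceq ▸ hcneg
      have := (div_neg_iff.mp this)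
      rcases this with ⟨h1, h2⟩ | ⟨h1, _⟩
      · linarith
      · linarith
    · -- 0 < t : MVT on [0, t]
      have hcont : ContinuousOn f (Set.Icc 0 t) := by
        intro y hy
        have : |y| < ε := by
          rw [abs_lt] at htδ ⊢
          constructor
          · linarith [hy.1, hε]
          · have := hy.2; have := min_le_right δ ε; linarith [htδ.2]
        exact ((hd y this).continuousAt).continuousWithinAt
      obtain ⟨c, hc, hceq⟩ := exists_hasDerivAt_eq_slope f D htpos hcont (by
        intro y hy
        apply hd
        rw [abs_lt] at htδ ⊢
        constructor
        · linarith [hy.1, hε]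
        · have := hy.2; have := min_le_right δ ε; linarith [htδ.2])
      have hcpos : 0 < D c := by
        apply hDpos c hc.1
        rw [abs_lt] at htδ
        linarith [hc.2, htδ.2]
      rw [hf0] at hceq
      have : 0 < (f t - 0) / (t - 0) := hceq ▸ hcpos
      have hden : t - 0 > 0 := by linarith
      rcases div_pos_iff.mp this with ⟨h1, _⟩ | ⟨_, h2⟩
      · linarith
      · linarith
  rw [eventually_nhdsWithin_iff, Metric.eventually_nhds_iff]
  exact ⟨δ', hδ'pos, fun y hy hy' => hmain y (by simpa using hy') (by simpa [Real.dist_eq] using hy)⟩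
lemma fderiv_swap {n : ℕ} {f : (Fin n → ℝ) → ℝ} {x : Fin n → ℝ}
    (hf : ContDiffAt ℝ 2 f x) (a b : Fin n → ℝ) :
    fderiv ℝ (fun y => fderiv ℝ f y a) x b = fderiv ℝ (fun y => fderiv ℝ f y b) x a := by
  have hdf : DifferentiableAt ℝ (fderiv ℝ f) x := by
    have h := hf.fderiv_right (m := 1) (by norm_num)
    exact h.differentiableAt one_ne_zero
  have hsymm := hf.isSymmSndFDerivAt (by simp)
  have key : ∀ c : Fin n → ℝ, fderiv ℝ (fun y => fderiv ℝ f y c) x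
      = (fderiv ℝ (fderiv ℝ f) x).flip c := by
    intro c
    have h := fderiv_clm_apply (c := fderiv ℝ f) (u := fun _ => c) hdf (differentiableAt_const c)
    simpa using h
  rw [key a, key b]
  simp only [ContinuousLinearMap.flip_apply]
  exact hsymm b a

section Smooth
variable {n : ℕ} {U : Set (Fin n → ℝ)} {v : (Fin n → ℝ) → ℝ}

lemma pgrad_smooth (hU : IsOpen U) (hsm : ContDiffOn ℝ (⊤ : ℕ∞) v U) (i : Fin n) :
    ContDiffOn ℝ (⊤ : ℕ∞) (fun y => pgrad v y i) U := by
  exact (hsm.fderiv_of_isOpen hU (by simp)).clm_apply contDiffOn_const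

lemma phess_smooth (hU : IsOpen U) (hsm : ContDiffOn ℝ (⊤ : ℕ∞) v U) (i j : Fin n) :
    ContDiffOn ℝ (⊤ : ℕ∞) (fun y => phess v y i j) U := by
  exact (((pgrad_smooth hU hsm i).fderiv_of_isOpen hU (by simp))).clm_apply contDiffOn_const

lemma pgrad_diff (hU : IsOpen U) (hsm : ContDiffOn ℝ (⊤ : ℕ∞) v U) {x : Fin n → ℝ} (hx : x ∈ U)
    (i : Fin n) : DifferentiableAt ℝ (fun y => pgrad v y i) x :=
  ((pgrad_smooth hU hsm i).differentiableOn (by simp)).differentiableAt (hU.mem_nhds hx)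

lemma phess_diff (hU : IsOpen U) (hsm : ContDiffOn ℝ (⊤ : ℕ∞) v U) {x : Fin n → ℝ} (hx : x ∈ U)
    (i j : Fin n) : DifferentiableAt ℝ (fun y => phess v y i j) x :=
  ((phess_smooth hU hsm i j).differentiableOn (by simp)).differentiableAt (hU.mem_nhds hx)

lemma v_diff (hU : IsOpen U) (hsm : ContDiffOn ℝ (⊤ : ℕ∞) v U) {x : Fin n → ℝ} (hx : x ∈ U) :
    DifferentiableAt ℝ v x :=
  (hsm.differentiableOn (by simp)).differentiableAt (hU.mem_nhds hx)

lemma phess_symm (hU : IsOpen U) (hsm : ContDiffOn ℝ (⊤ : ℕ∞) v U) {x : Fin n → ℝ} (hx : x ∈ U)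
    (i j : Fin n) : phess v x i j = phess v x j i := by
  have hat : ContDiffAt ℝ 2 v x := (hsm.contDiffAt (hU.mem_nhds hx)).of_le (WithTop.coe_le_coe.2 le_top)
  exact fderiv_swap hat _ _

lemma third_symm (hU : IsOpen U) (hsm : ContDiffOn ℝ (⊤ : ℕ∞) v U) {x : Fin n → ℝ} (hx : x ∈ U)
    (i j k : Fin n) :
    fderiv ℝ (fun y => phess v y i j) x (Pi.single k 1)
      = fderiv ℝ (fun y => phess v y i k) x (Pi.single j 1) := by
  have hat : ContDiffAt ℝ 2 (fun y => pgrad v y i) x :=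
    ((pgrad_smooth hU hsm i).contDiffAt (hU.mem_nhds hx)).of_le (WithTop.coe_le_coe.2 le_top)
  exact fderiv_swap hat _ _

end Smooth
section QC
variable {n : ℕ} {U : Set (Fin n → ℝ)} {v : (Fin n → ℝ) → ℝ}

lemma Phi_diff (hU : IsOpen U) (hsm : ContDiffOn ℝ (⊤ : ℕ∞) v U) {x : Fin n → ℝ} (hx : x ∈ U)
    (a : Fin n → ℝ) : DifferentiableAt ℝ (fun y => fderiv ℝ v y a) x := by
  have h : ContDiffOn ℝ (⊤ : ℕ∞) (fun y => fderiv ℝ v y a) U :=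
    (hsm.fderiv_of_isOpen hU (by simp)).clm_apply contDiffOn_const
  exact (h.differentiableOn (by simp)).differentiableAt (hU.mem_nhds hx)

lemma Phi_val (hU : IsOpen U) (hsm : ContDiffOn ℝ (⊤ : ℕ∞) v U) {x : Fin n → ℝ} (hx : x ∈ U)
    (a d : Fin n → ℝ) :
    fderiv ℝ (fun y => fderiv ℝ v y a) x d = ∑ i, a i * (∑ j, d j * phess v x i j) := by
  have hfun : (fun y => fderiv ℝ v y a) = fun y => ∑ i, a i * pgrad v y i :=
    funext fun y => clm_eval (fderiv ℝ v y) a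
  rw [hfun]
  have hdiff : ∀ i ∈ Finset.univ, DifferentiableAt ℝ
      (fun y => a i * pgrad v y i) (x : Fin n → ℝ) :=
    fun i _ => (pgrad_diff hU hsm hx i).const_mul (a i)
  rw [fderiv_fun_sum hdiff]
  rw [ContinuousLinearMap.sum_apply]
  refine Finset.sum_congr rfl fun i _ => ?_
  rw [fderiv_const_mul (pgrad_diff hU hsm hx i) (a i)]
  rw [ContinuousLinearMap.smul_apply, smul_eq_mul]
  congr 1
  have h2 := clm_eval (fderiv ℝ (fun y => pgrad v y i) x) d
  rw [h2]
  rfl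

lemma qc_hess_nonpos (hU : IsOpen U)
    (hqc : ∀ (x y : Fin n → ℝ) (l : ℝ), 0 ≤ l → l ≤ 1 →
      min (v x) (v y) ≤ v (l • x + (1 - l) • y))
    (hsm : ContDiffOn ℝ (⊤ : ℕ∞) v U) {x : Fin n → ℝ} (hx : x ∈ U)
    (z : Fin n → ℝ) (hz : ∑ i, z i * pgrad v x i = 0) :
    ∑ i, ∑ j, phess v x i j * z i * z j ≤ 0 := by
  by_contra hq0
  push_neg at hq0
  set q := ∑ i, ∑ j, phess v x i j * z i * z j with hqdef
  -- the two curves  t ↦ x + t z  and  t ↦ x - t z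
  set c : ℝ → (Fin n → ℝ) := fun t => x + t • z with hcdef
  have hccont : Continuous c := by fun_prop
  have hc0 : c 0 = x := by simp [hcdef]
  -- epsilon neighborhood
  obtain ⟨ε, hεpos, hεball⟩ := Metric.isOpen_iff.1 (hU.preimage hccont) 0
    (by simp [hc0, hx])
  have hcU : ∀ t : ℝ, |t| < ε → c t ∈ U := by
    intro t ht
    exact hεball (by simpa [Real.dist_eq] using ht)
  -- derivative of c
  have hc' : ∀ t : ℝ, HasDerivAt c z t := by
    intro t
    have h1 : HasDerivAt (fun t : ℝ => t • z) ((1:ℝ) • z) t :=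
      (hasDerivAt_id t).smul_const z
    simpa [hcdef] using h1.const_add x
  -- the function f t = v (c t) - v x and its derivative D t
  set D : ℝ → ℝ := fun t => fderiv ℝ v (c t) z with hDdef
  have hf' : ∀ t : ℝ, |t| < ε → HasDerivAt (fun t => v (c t) - v x) (D t) t := by
    intro t ht
    have h1 : HasDerivAt (fun t => v (c t)) (fderiv ℝ v (c t) z) t :=
      ((v_diff hU hsm (hcU t ht)).hasFDerivAt).comp_hasDerivAt t (hc' t)
    simpa using h1.sub_const (v x)
  have hD0 : D 0 = 0 := by
    rw [hDdef]
    simp only [hc0]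
    rw [clm_eval (fderiv ℝ v x) z]
    exact hz
  have hDq : HasDerivAt D q 0 := by
    have h1 : HasFDerivAt (fun y => fderiv ℝ v y z)
        (fderiv ℝ (fun y => fderiv ℝ v y z) x) x := (Phi_diff hU hsm hx z).hasFDerivAt
    rw [← hc0] at h1
    have h2 := h1.comp_hasDerivAt 0 (hc' 0)
    rw [hc0] at h2
    have h3 : fderiv ℝ (fun y => fderiv ℝ v y z) x z = q := by
      rw [Phi_val hU hsm hx z z, hqdef]
      refine Finset.sum_congr rfl fun i _ => ?_
      rw [Finset.mul_sum]
      refine Finset.sum_congr rfl fun j _ => by ring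
    rw [h3] at h2
    exact h2
  -- apply the second-derivative test to both f and its reflection
  have hev1 := pos_of_second_deriv _ D ε q hεpos hf' (by simp [hc0]) hD0 hDq hq0
  -- the reflected function
  have hf'neg : ∀ t : ℝ, |t| < ε → HasDerivAt (fun t => v (c (-t)) - v x) (-D (-t)) t := by
    intro t ht
    have h1 := hf' (-t) (by simpa using ht)
    have h2 := h1.comp t (hasDerivAt_neg t)
    simpa [mul_comm, Function.comp_def] using h2
  have hDnegq : HasDerivAt (fun t : ℝ => -D (-t)) q 0 := by
    have hDq' : HasDerivAt D q (-(0:ℝ)) := by simpa using hDq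
    have h1 := hDq'.comp 0 (hasDerivAt_neg (0:ℝ))
    have h2 := h1.neg
    simpa [mul_comm, Function.comp_def, Pi.neg_def] using h2
  have hev2 := pos_of_second_deriv _ (fun t => -D (-t)) ε q hεpos hf'neg
    (by simp [hc0]) (by simp [hD0]) hDnegq hq0
  -- pick a point where both hold
  obtain ⟨t0, ht0, ht0ne⟩ := ((hev1.and hev2).and self_mem_nhdsWithin).exists
  simp only [Set.mem_compl_iff, Set.mem_singleton_iff] at ht0ne
  obtain ⟨h1, h2⟩ := ht0
  -- quasiconcavity at the midpoint
  have hmid : (1/2 : ℝ) • c t0 + (1 - 1/2 : ℝ) • c (-t0) = x := by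
    rw [hcdef]
    simp only
    module
  have := hqc (c t0) (c (-t0)) (1/2) (by norm_num) (by norm_num)
  rw [hmid] at this
  have hlt : v x < min (v (c t0)) (v (c (-t0))) := lt_min (by linarith) (by linarith)
  linarith [lt_of_lt_of_le hlt this]
end QC
section Div
variable {n : ℕ} {U : Set (Fin n → ℝ)} {v : (Fin n → ℝ) → ℝ} {x : Fin n → ℝ}

lemma div_term (hU : IsOpen U) (hsm : ContDiffOn ℝ (⊤ : ℕ∞) v U) (hx : x ∈ U)
    (hw : (∑ k, (pgrad v x k)^2) ≠ 0) (i : Fin n) :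
    fderiv ℝ (fun y => (∑ k, (pgrad v y k)^2)⁻¹ *
        ((∑ k, phess v y k k) * pgrad v y i - ∑ j, phess v y i j * pgrad v y j)) x
        (Pi.single i 1)
    = (∑ k, (pgrad v x k)^2)⁻¹ *
        ((∑ k, phess v x k k) * phess v x i i
          + (∑ k, fderiv ℝ (fun y => phess v y k k) x (Pi.single i 1)) * pgrad v x i
          - ∑ j, (fderiv ℝ (fun y => phess v y i j) x (Pi.single i 1) * pgrad v x j
              + phess v x i j * phess v x j i))
      + ((∑ k, phess v x k k) * pgrad v x i - ∑ j, phess v x i j * pgrad v x j) *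
          (-(((∑ k, (pgrad v x k)^2))^2)⁻¹ * (∑ k, 2 * pgrad v x k * phess v x k i)) := by
  have dG : ∀ k, DifferentiableAt ℝ (fun y => pgrad v y k) x := pgrad_diff hU hsm hx
  have dHH : ∀ k l, DifferentiableAt ℝ (fun y => phess v y k l) x := phess_diff hU hsm hx
  have hGval : ∀ k l, fderiv ℝ (fun y => pgrad v y k) x (Pi.single l 1) = phess v x k l := by
    intro k l; simp only [pgrad, phess]
  have dW : DifferentiableAt ℝ (fun y => ∑ k, (pgrad v y k)^2) x :=
    DifferentiableAt.fun_sum fun k _ => (dG k).pow 2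
  have dWinv : DifferentiableAt ℝ (fun y => (∑ k, (pgrad v y k)^2)⁻¹) x := dW.inv hw
  have dS : DifferentiableAt ℝ (fun y => ∑ k, phess v y k k) x :=
    DifferentiableAt.fun_sum fun k _ => dHH k k
  have dR : DifferentiableAt ℝ (fun y => ∑ j, phess v y i j * pgrad v y j) x :=
    DifferentiableAt.fun_sum fun j _ => (dHH i j).mul (dG j)
  have dP : DifferentiableAt ℝ (fun y => (∑ k, phess v y k k) * pgrad v y i
      - ∑ j, phess v y i j * pgrad v y j) x := (dS.mul (dG i)).sub dR
  -- derivative of W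
  have hWval : fderiv ℝ (fun y => ∑ k, (pgrad v y k)^2) x (Pi.single i 1)
      = ∑ k, 2 * pgrad v x k * phess v x k i := by
    have hfun : (fun y => ∑ k, (pgrad v y k)^2)
        = (fun y => ∑ k, pgrad v y k * pgrad v y k) :=
      funext fun y => Finset.sum_congr rfl fun k _ => pow_two _
    rw [hfun, fderiv_fun_sum (fun k _ => (dG k).fun_mul (dG k)), ContinuousLinearMap.sum_apply]
    refine Finset.sum_congr rfl fun k _ => ?_
    rw [fderiv_fun_mul (dG k) (dG k)]
    simp only [ContinuousLinearMap.add_apply, ContinuousLinearMap.smul_apply,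
      smul_eq_mul, hGval]
    ring
  -- derivative of W⁻¹
  have hWinvval : fderiv ℝ (fun y => (∑ k, (pgrad v y k)^2)⁻¹) x (Pi.single i 1)
      = -(((∑ k, (pgrad v x k)^2))^2)⁻¹ * (∑ k, 2 * pgrad v x k * phess v x k i) := by
    have h1 := (hasDerivAt_inv hw).comp_hasFDerivAt x dW.hasFDerivAt
    have h2 : HasFDerivAt (fun y => (∑ k, (pgrad v y k)^2)⁻¹)
        ((-(((∑ k, (pgrad v x k)^2))^2)⁻¹) • fderiv ℝ (fun y => ∑ k, (pgrad v y k)^2) x) x := by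
      exact h1
    rw [h2.fderiv]
    simp only [ContinuousLinearMap.smul_apply, smul_eq_mul, hWval]
  -- derivative of S
  have hSval : fderiv ℝ (fun y => ∑ k, phess v y k k) x (Pi.single i 1)
      = ∑ k, fderiv ℝ (fun y => phess v y k k) x (Pi.single i 1) := by
    rw [fderiv_fun_sum (fun k _ => dHH k k), ContinuousLinearMap.sum_apply]
  -- derivative of R
  have hRval : fderiv ℝ (fun y => ∑ j, phess v y i j * pgrad v y j) x (Pi.single i 1)
      = ∑ j, (fderiv ℝ (fun y => phess v y i j) x (Pi.single i 1) * pgrad v x j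
          + phess v x i j * phess v x j i) := by
    rw [fderiv_fun_sum (fun j _ => (dHH i j).fun_mul (dG j)), ContinuousLinearMap.sum_apply]
    refine Finset.sum_congr rfl fun j _ => ?_
    rw [fderiv_fun_mul (dHH i j) (dG j)]
    simp only [ContinuousLinearMap.add_apply, ContinuousLinearMap.smul_apply,
      smul_eq_mul, hGval]
    ring
  -- derivative of P
  have hPval : fderiv ℝ (fun y => (∑ k, phess v y k k) * pgrad v y i
        - ∑ j, phess v y i j * pgrad v y j) x (Pi.single i 1)
      = ((∑ k, phess v x k k) * phess v x i i
          + (∑ k, fderiv ℝ (fun y => phess v y k k) x (Pi.single i 1)) * pgrad v x i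
          - ∑ j, (fderiv ℝ (fun y => phess v y i j) x (Pi.single i 1) * pgrad v x j
              + phess v x i j * phess v x j i)) := by
    rw [fderiv_fun_sub (dS.fun_mul (dG i)) dR, ContinuousLinearMap.sub_apply,
      fderiv_fun_mul dS (dG i)]
    simp only [ContinuousLinearMap.add_apply, ContinuousLinearMap.smul_apply,
      smul_eq_mul, hGval]
    rw [hSval, hRval]
    ring
  rw [fderiv_fun_mul dWinv dP]
  simp only [ContinuousLinearMap.add_apply, ContinuousLinearMap.smul_apply, smul_eq_mul]
  rw [hPval, hWinvval]
end Div
section Algebra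
variable {n : ℕ}

lemma sum_factor (f : Fin n → ℝ) (c : ℝ) : ∑ i, c * f i = c * ∑ i, f i :=
  (Finset.mul_sum _ _ _).symm

lemma step2_algebra (g : Fin n → ℝ) (H : Fin n → Fin n → ℝ)
    (T : Fin n → Fin n → Fin n → ℝ) (w : ℝ)
    (hsymmH : ∀ i j, H i j = H j i)
    (hsymmT : ∀ i j k, T i j k = T i k j) :
    ∑ i, (w⁻¹ * ((∑ k, H k k) * H i i + (∑ k, T k k i) * g i
          - ∑ j, (T i j i * g j + H i j * H j i))
        + ((∑ k, H k k) * g i - ∑ j, H i j * g j) * (-(w^2)⁻¹ * (∑ k, 2 * g k * H k i)))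
      = ((∑ i, H i i)^2 - ∑ i, ∑ j, (H i j)^2) * w⁻¹
        + 2 * ((∑ i, (∑ j, H i j * g j)^2)
            - (∑ i, H i i) * (∑ i, g i * (∑ j, H i j * g j))) * (w^2)⁻¹ := by
  set b : Fin n → ℝ := fun i => ∑ j, H i j * g j with hbdef
  set trH := ∑ k, H k k with htrdef
  have h2b : ∀ i, ∑ k, 2 * g k * H k i = 2 * b i := by
    intro i
    have : ∀ k, 2 * g k * H k i = 2 * (H i k * g k) := fun k => by rw [hsymmH k i]; ring
    rw [Finset.sum_congr rfl fun k _ => this k, sum_factor]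
  have hsplit : ∀ i, (w⁻¹ * (trH * H i i + (∑ k, T k k i) * g i
          - ∑ j, (T i j i * g j + H i j * H j i))
        + (trH * g i - b i) * (-(w^2)⁻¹ * (∑ k, 2 * g k * H k i)))
      = w⁻¹ * (trH * H i i - ∑ j, H i j * H j i)
        + w⁻¹ * ((∑ k, T k k i) * g i - ∑ j, T i j i * g j)
        + (w^2)⁻¹ * (2 * (b i * b i - trH * (g i * b i))) := by
    intro i
    rw [h2b i, Finset.sum_add_distrib]
    ring
  rw [Finset.sum_congr rfl fun i _ => hsplit i]
  rw [Finset.sum_add_distrib, Finset.sum_add_distrib]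
  -- first piece
  have p1 : ∑ i, w⁻¹ * (trH * H i i - ∑ j, H i j * H j i)
      = (trH^2 - ∑ i, ∑ j, (H i j)^2) * w⁻¹ := by
    rw [sum_factor, Finset.sum_sub_distrib, sum_factor]
    have : ∀ i, (∑ j, H i j * H j i) = ∑ j, (H i j)^2 :=
      fun i => Finset.sum_congr rfl fun j _ => by rw [hsymmH j i]; ring
    rw [Finset.sum_congr rfl fun i _ => this i, htrdef]
    ring
  -- second piece vanishes
  have p2 : ∑ i, w⁻¹ * ((∑ k, T k k i) * g i - ∑ j, T i j i * g j) = 0 := by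
    rw [sum_factor, Finset.sum_sub_distrib]
    have key : ∑ i, ∑ j, T i j i * g j = ∑ i, (∑ k, T k k i) * g i := by
      have h1 : ∀ i j, T i j i * g j = T i i j * g j := fun i j => by rw [hsymmT i j i]
      rw [Finset.sum_congr rfl fun i _ => Finset.sum_congr rfl fun j _ => h1 i j]
      rw [Finset.sum_comm]
      exact Finset.sum_congr rfl fun j _ => (Finset.sum_mul _ _ _).symm
    rw [key]
    ring
  -- third piece
  have p3 : ∑ i, (w^2)⁻¹ * (2 * (b i * b i - trH * (g i * b i)))
      = 2 * ((∑ i, (b i)^2) - trH * (∑ i, g i * b i)) * (w^2)⁻¹ := by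
    rw [sum_factor]
    have : ∀ i, 2 * (b i * b i - trH * (g i * b i))
        = 2 * (b i)^2 - 2 * trH * (g i * b i) := fun i => by ring
    rw [Finset.sum_congr rfl fun i _ => this i, Finset.sum_sub_distrib, sum_factor, sum_factor]
    ring
  rw [p1, p2, p3]
  ring
end Algebra
section Step3
variable {n : ℕ}

lemma sum_swap_mul (M : Fin n → Fin n → ℝ) (a c : Fin n → ℝ) :
    ∑ i, a i * (∑ j, M i j * c j) = ∑ j, (∑ i, M i j * a i) * c j := by
  simp_rw [Finset.mul_sum, Finset.sum_mul]
  rw [Finset.sum_comm]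
  exact Finset.sum_congr rfl fun i _ => Finset.sum_congr rfl fun j _ => by ring

lemma step3_ineq (g : Fin n → ℝ) (H : Fin n → Fin n → ℝ) (w : ℝ)
    (hw : w = ∑ k, (g k)^2) (hwpos : 0 < w)
    (hsymmH : ∀ i j, H i j = H j i)
    (hperp : ∀ z : Fin n → ℝ, (∑ i, z i * g i) = 0 →
      ∑ i, ∑ j, H i j * z i * z j ≤ 0) :
    0 ≤ ((∑ i, H i i)^2 - ∑ i, ∑ j, (H i j)^2) * w⁻¹
        + 2 * ((∑ i, (∑ j, H i j * g j)^2)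
            - (∑ i, H i i) * (∑ i, g i * (∑ j, H i j * g j))) * (w^2)⁻¹ := by
  set b : Fin n → ℝ := fun i => ∑ j, H i j * g j with hbdef
  set s := ∑ i, g i * b i with hsdef
  set trH := ∑ i, H i i with htrdef
  set β := ∑ i, (b i)^2 with hβdef
  set nH := ∑ i, ∑ j, (H i j)^2 with hnHdef
  set N : Fin n → Fin n → ℝ :=
    fun i j => w^2 * H i j - w * g i * b j - w * b i * g j + s * g i * g j with hNdef
  have hcol : ∀ j, ∑ i, H i j * g i = b j := by
    intro j
    rw [Finset.sum_congr rfl fun i _ => by rw [hsymmH i j]]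
  have hbg : ∑ j, b j * g j = s := by
    rw [hsdef]; exact Finset.sum_congr rfl fun j _ => by ring
  have hbi : ∀ i, (∑ j, H i j * g j) = b i := fun i => rfl
  -- N is symmetric
  have hNsymm : ∀ i j, N i j = N j i := by
    intro i j; rw [hNdef]; simp only; rw [hsymmH i j]; ring
  -- N is negative semidefinite
  have hNnsd : ∀ xv : Fin n → ℝ, (∑ i, ∑ j, N i j * xv i * xv j) ≤ 0 := by
    intro xv
    set cc := ∑ k, g k * xv k with hccdef
    set z : Fin n → ℝ := fun k => w * xv k - cc * g k with hzdef
    have hzperp : (∑ i, z i * g i) = 0 := by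
      rw [hzdef]
      simp only
      have : ∀ i, (w * xv i - cc * g i) * g i = w * (g i * xv i) - cc * (g i)^2 :=
        fun i => by ring
      rw [Finset.sum_congr rfl fun i _ => this i, Finset.sum_sub_distrib,
        sum_factor, sum_factor, ← hccdef, ← hw]
      ring
    have hform : (∑ i, ∑ j, N i j * xv i * xv j) = ∑ i, ∑ j, H i j * z i * z j := by
      set R : Fin n → ℝ := fun i => ∑ j, H i j * xv j with hRdef
      set Bx := ∑ j, b j * xv j with hBxdef
      have hRi : ∀ i, (∑ j, H i j * xv j) = R i := fun i => rfl
      have hgR : ∑ i, g i * R i = Bx := by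
        rw [hRdef, hBxdef]
        simp only
        rw [sum_swap_mul H g xv]
        exact Finset.sum_congr rfl fun j _ => by rw [hcol j]
      -- LHS rows
      have hrowL : ∀ i, ∑ j, N i j * xv i * xv j
          = xv i * (w^2 * R i - w * g i * Bx - w * b i * cc + s * g i * cc) := by
        intro i
        have h1 : ∀ j, N i j * xv i * xv j
            = xv i * (w^2 * (H i j * xv j) - (w * g i) * (b j * xv j)
                - (w * b i) * (g j * xv j) + (s * g i) * (g j * xv j)) := by
          intro j; rw [hNdef]; simp only; ring
        rw [Finset.sum_congr rfl fun j _ => h1 j, ← Finset.mul_sum]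
        congr 1
        rw [Finset.sum_add_distrib, Finset.sum_sub_distrib, Finset.sum_sub_distrib,
          sum_factor, sum_factor, sum_factor, sum_factor, hRi i, ← hBxdef]
      -- RHS rows
      have hrowR : ∀ i, ∑ j, H i j * z i * z j
          = z i * (w * R i - cc * b i) := by
        intro i
        have h1 : ∀ j, H i j * z i * z j
            = z i * (w * (H i j * xv j) - cc * (H i j * g j)) := by
          intro j; rw [hzdef]; simp only; ring
        rw [Finset.sum_congr rfl fun j _ => h1 j, ← Finset.mul_sum]
        congr 1
        rw [Finset.sum_sub_distrib, sum_factor, sum_factor]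
        try rw [hRi i]
        try rw [hbi i]
      rw [Finset.sum_congr rfl fun i _ => hrowL i, Finset.sum_congr rfl fun i _ => hrowR i]
      -- both sides are now single sums; expand z and compare
      have hz2 : ∀ i, z i * (w * R i - cc * b i)
          = w^2 * (xv i * R i) - (w * cc) * (xv i * b i) - (w * cc) * (g i * R i)
            + cc^2 * (g i * b i) := by
        intro i; rw [hzdef]; simp only; ring
      rw [Finset.sum_congr rfl fun i _ => hz2 i]
      have hx2 : ∀ i, xv i * (w^2 * R i - w * g i * Bx - w * b i * cc + s * g i * cc)
          = w^2 * (xv i * R i) - (w * Bx) * (g i * xv i) - (w * cc) * (xv i * b i)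
            + (s * cc) * (g i * xv i) := by
        intro i; ring
      rw [Finset.sum_congr rfl fun i _ => hx2 i]
      simp only [Finset.sum_add_distrib, Finset.sum_sub_distrib, sum_factor]
      rw [hgR]
      have hgx : (∑ i, g i * xv i) = cc := rfl
      have hxb : (∑ i, xv i * b i) = Bx := by
        rw [hBxdef]; exact Finset.sum_congr rfl fun j _ => by ring
      try rw [hgx]
      try rw [hxb]
      try rw [← hsdef]
      try ring
    rw [hform]
    exact hperp z hzperp
  -- trace of N
  have htrN : ∑ i, N i i = w^2 * trH - w * s := by
    have h1 : ∀ i, N i i = w^2 * H i i - 2 * w * (g i * b i) + s * (g i)^2 := by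
      intro i; rw [hNdef]; simp only; ring
    rw [Finset.sum_congr rfl fun i _ => h1 i, Finset.sum_add_distrib,
      Finset.sum_sub_distrib, sum_factor, sum_factor, sum_factor, ← hsdef, ← htrdef, ← hw]
    ring
  -- sum of squares of N
  have hsumN : ∑ i, ∑ j, (N i j)^2 = w^4 * nH - 2 * w^3 * β + w^2 * s^2 := by
    set c : Fin n → ℝ := fun i => s * g i - w * b i with hcdef
    have hrow : ∀ i, ∑ j, (N i j)^2
        = w^4 * (∑ j, (H i j)^2) - (2 * w^3 * g i) * (∑ j, H i j * b j)
          + (2 * w^2 * c i) * (∑ j, H i j * g j)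
          + (w^2 * (g i)^2) * (∑ j, (b j)^2) + (c i)^2 * (∑ j, (g j)^2)
          - (2 * w * g i * c i) * (∑ j, b j * g j) := by
      intro i
      have h1 : ∀ j, (N i j)^2
          = w^4 * (H i j)^2 - (2 * w^3 * g i) * (H i j * b j)
            + (2 * w^2 * c i) * (H i j * g j)
            + (w^2 * (g i)^2) * (b j)^2 + (c i)^2 * (g j)^2
            - (2 * w * g i * c i) * (b j * g j) := by
        intro j; rw [hNdef, hcdef]; simp only; ring
      rw [Finset.sum_congr rfl fun j _ => h1 j]
      simp only [Finset.sum_add_distrib, Finset.sum_sub_distrib, sum_factor]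
    rw [Finset.sum_congr rfl fun i _ => hrow i]
    -- now the outer sum
    have hQ : ∑ i, g i * (∑ j, H i j * b j) = β := by
      rw [sum_swap_mul H g b, hβdef]
      refine Finset.sum_congr rfl fun j _ => ?_
      rw [hcol j]; ring
    have hcb : ∑ i, c i * b i = s * s - w * β := by
      have h1 : ∀ i, c i * b i = s * (g i * b i) - w * (b i)^2 := by
        intro i; rw [hcdef]; simp only; ring
      rw [Finset.sum_congr rfl fun i _ => h1 i, Finset.sum_sub_distrib, sum_factor,
        sum_factor, ← hsdef, ← hβdef]
    have hcc2 : ∑ i, (c i)^2 = s^2 * w - 2 * w * s * s + w^2 * β := by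
      have h1 : ∀ i, (c i)^2 = s^2 * (g i)^2 - (2 * w * s) * (g i * b i) + w^2 * (b i)^2 := by
        intro i; rw [hcdef]; simp only; ring
      rw [Finset.sum_congr rfl fun i _ => h1 i, Finset.sum_add_distrib,
        Finset.sum_sub_distrib, sum_factor, sum_factor, sum_factor, ← hsdef, ← hβdef, ← hw]
      try ring
    have hgc : ∑ i, g i * c i = s * w - w * s := by
      have h1 : ∀ i, g i * c i = s * (g i)^2 - w * (g i * b i) := by
        intro i; rw [hcdef]; simp only; ring
      rw [Finset.sum_congr rfl fun i _ => h1 i, Finset.sum_sub_distrib, sum_factor,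
        sum_factor, ← hsdef, ← hw]
    -- expand the outer sum termwise
    have h2 : ∀ i, w^4 * (∑ j, (H i j)^2) - (2 * w^3 * g i) * (∑ j, H i j * b j)
          + (2 * w^2 * c i) * (∑ j, H i j * g j)
          + (w^2 * (g i)^2) * (∑ j, (b j)^2) + (c i)^2 * (∑ j, (g j)^2)
          - (2 * w * g i * c i) * (∑ j, b j * g j)
        = w^4 * (∑ j, (H i j)^2) - (2 * w^3) * (g i * (∑ j, H i j * b j))
          + (2 * w^2) * (c i * b i) + (w^2 * β) * (g i)^2 + w * (c i)^2
          - (2 * w * s) * (g i * c i) := by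
      intro i
      rw [hbi i, ← hw, hbg, ← hβdef]
      ring
    rw [Finset.sum_congr rfl fun i _ => h2 i]
    simp only [Finset.sum_add_distrib, Finset.sum_sub_distrib, sum_factor]
    rw [hQ, hcb, hcc2, hgc, ← hnHdef, ← hw]
    ring
  -- combine
  have hkey := nsd_trace_sq N hNsymm hNnsd
  rw [htrN, hsumN] at hkey
  have key2 : 0 ≤ 2 * (β - trH * s) + w * (trH^2 - nH) := by
    by_contra hcon
    push_neg at hcon
    have h3 : 0 < w^3 * (-(2 * (β - trH * s) + w * (trH^2 - nH))) :=
      mul_pos (pow_pos hwpos 3) (by linarith)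
    nlinarith [hkey, h3]
  have hfin : (trH^2 - nH) * w⁻¹ + 2 * (β - trH * s) * (w^2)⁻¹
      = (2 * (β - trH * s) + w * (trH^2 - nH)) * (w^2)⁻¹ := by
    have hwne : w ≠ 0 := ne_of_gt hwpos
    field_simp
    try ring
  have final : 0 ≤ (trH^2 - nH) * w⁻¹ + 2 * (β - trH * s) * (w^2)⁻¹ := by
    rw [hfin]
    exact mul_nonneg key2 (by positivity)
  exact final
end Step3
theorem statement6 (n : ℕ) (hn : 2 ≤ n) (U : Set (Fin n → ℝ)) (hU : IsOpen U)
    (v : (Fin n → ℝ) → ℝ)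
    (hqc : ∀ (x y : Fin n → ℝ) (l : ℝ), 0 ≤ l → l ≤ 1 →
      min (v x) (v y) ≤ v (l • x + (1 - l) • y))
    (hsm : ContDiffOn ℝ (⊤ : ℕ∞) v U)
    (x : Fin n → ℝ) (hx : x ∈ U) (hDv : (fun i => pgrad v x i) ≠ 0) :
    0 ≤ pdiv (fun y i => (∑ k, (pgrad v y k) ^ 2)⁻¹ *
        ((∑ k, phess v y k k) * pgrad v y i - ∑ j, phess v y i j * pgrad v y j)) x := by
  have hgne : ∃ i, pgrad v x i ≠ 0 := by
    by_contra hcon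
    push_neg at hcon
    exact hDv (funext hcon)
  obtain ⟨i0, hi0⟩ := hgne
  have hwpos : 0 < ∑ k, (pgrad v x k)^2 :=
    Finset.sum_pos' (fun k _ => sq_nonneg _)
      ⟨i0, Finset.mem_univ i0, lt_of_le_of_ne (sq_nonneg _) (Ne.symm (pow_ne_zero 2 hi0))⟩
  have hwne : (∑ k, (pgrad v x k)^2) ≠ 0 := ne_of_gt hwpos
  have step1 : pdiv (fun y i => (∑ k, (pgrad v y k) ^ 2)⁻¹ *
        ((∑ k, phess v y k k) * pgrad v y i - ∑ j, phess v y i j * pgrad v y j)) x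
      = ∑ i, ((∑ k, (pgrad v x k)^2)⁻¹ *
        ((∑ k, phess v x k k) * phess v x i i
          + (∑ k, fderiv ℝ (fun y => phess v y k k) x (Pi.single i 1)) * pgrad v x i
          - ∑ j, (fderiv ℝ (fun y => phess v y i j) x (Pi.single i 1) * pgrad v x j
              + phess v x i j * phess v x j i))
      + ((∑ k, phess v x k k) * pgrad v x i - ∑ j, phess v x i j * pgrad v x j) *
          (-(((∑ k, (pgrad v x k)^2))^2)⁻¹ * (∑ k, 2 * pgrad v x k * phess v x k i))) := by
    simp only [pdiv]
    exact Finset.sum_congr rfl fun i _ => div_term hU hsm hx hwne i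
  rw [step1]
  have h2 := step2_algebra (fun i => pgrad v x i) (fun i j => phess v x i j)
      (fun i j k => fderiv ℝ (fun y => phess v y i j) x (Pi.single k 1))
      (∑ k, (pgrad v x k)^2)
      (fun i j => phess_symm hU hsm hx i j)
      (fun i j k => third_symm hU hsm hx i j k)
  have h3 := step3_ineq (fun i => pgrad v x i) (fun i j => phess v x i j)
      (∑ k, (pgrad v x k)^2) rfl hwpos (fun i j => phess_symm hU hsm hx i j)
      (fun z hz => qc_hess_nonpos hU hqc hsm hx z hz)
  exact le_of_le_of_eq h3 h2.symm
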